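/- For any set Δ of L*-formulas and any L*-formula φ: Δ ⊭ φ if and only if Δ ∪ {−φ} has a model, i.e., there is a context C with C ⊩⁺ ψ for every ψ ∈ Δ ∪ {−φ}, where − is the contextual weak negation. -/
import Mathlib


namespace LAD

/-- L-formulas: built from atoms by extensional connectives ⊃, ∩, ∪, ∼. -/
inductive LForm (A : Type) where
  | atom : A → LForm A
  | eimp : LForm A → LForm A → LForm A
  | econj : LForm A → LForm A → LForm A
  | edisj : LForm A → LForm A → LForm A
  | eneg : LForm A → LForm A

/-- L*-formulas: L-formulas closed under intensional connectives →, ∧, ∨, ¬. -/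
inductive SForm (A : Type) where
  | base : LForm A → SForm A
  | iimp : SForm A → SForm A → SForm A
  | iconj : SForm A → SForm A → SForm A
  | idisj : SForm A → SForm A → SForm A
  | ineg : SForm A → SForm A

variable {A : Type}

/-- A possible world: an assignment of truth values to atoms. -/
abbrev World (A : Type) := A → Bool

/-- A context is a (nonempty) set of possible worlds. -/
abbrev Context (A : Type) := Set (World A)

/-- Classical truth of an L-formula at a world. -/
def LForm.truth (w : World A) : LForm A → Bool
  | .atom a => w a
  | .eimp α β => !α.truth w || β.truth w
  | .econj α β => α.truth w && β.truth w
  | .edisj α β => α.truth w || β.truth w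
  | .eneg α => !α.truth w

/-- Assertibility and deniability conditions, as a pair (⊩⁺, ⊩⁻). -/
def SForm.sem : SForm A → Context A → Prop × Prop
  | .base α, C => (∀ w ∈ C, α.truth w = true, ∀ w ∈ C, α.truth w = false)
  | .ineg φ, C => ((φ.sem C).2, (φ.sem C).1)
  | .idisj φ ψ, C => ((φ.sem C).1 ∨ (ψ.sem C).1, (φ.sem C).2 ∧ (ψ.sem C).2)
  | .iconj φ ψ, C => ((φ.sem C).1 ∧ (ψ.sem C).1, (φ.sem C).2 ∨ (ψ.sem C).2)
  | .iimp φ ψ, C =>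
      (∀ D : Context A, D.Nonempty → D ⊆ C → (φ.sem D).1 → (ψ.sem D).1,
       ∃ D : Context A, D.Nonempty ∧ D ⊆ C ∧ (φ.sem D).1 ∧ (ψ.sem D).2)

/-- C ⊩⁺ φ : assertibility. -/
def Assert (C : Context A) (φ : SForm A) : Prop := (φ.sem C).1

/-- C ⊩⁻ φ : deniability. -/
def Deny (C : Context A) (φ : SForm A) : Prop := (φ.sem C).2

/-- Δ ⊨ ψ : assertibility-preserving consequence. -/
def Entails (Δ : Set (SForm A)) (ψ : SForm A) : Prop :=
  ∀ C : Context A, C.Nonempty → (∀ δ ∈ Δ, Assert C δ) → Assert C ψ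


/-- ⊥ := p ∩ ∼p for a fixed atom p. -/
def botF (p : A) : SForm A := .base (.econj (.atom p) (.eneg (.atom p)))

/-- ◇φ := ¬(φ → ⊥). -/
def dia (p : A) (φ : SForm A) : SForm A := .ineg (.iimp φ (botF p))

mutual
/-- Contextual weak negation −φ. -/
def wneg (p : A) : SForm A → SForm A
  | .base α => dia p (.ineg (.base α))
  | .ineg φ => wnegNeg p φ
  | .iimp φ ψ => dia p (.iconj φ (wneg p ψ))
  | .iconj φ ψ => .idisj (wneg p φ) (wneg p ψ)
  | .idisj φ ψ => .iconj (wneg p φ) (wneg p ψ)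

/-- −¬φ, the weak negation of the intensional negation of φ. -/
def wnegNeg (p : A) : SForm A → SForm A
  | .base α => dia p (.base α)
  | .ineg φ => wneg p φ
  | .iimp φ ψ => .iimp φ (wnegNeg p ψ)
  | .iconj φ ψ => .iconj (wnegNeg p φ) (wnegNeg p ψ)
  | .idisj φ ψ => .idisj (wnegNeg p φ) (wnegNeg p ψ)
end

lemma bot_deny (p : A) (D : Context A) : Deny D (botF p) := by
  intro w _
  simp [LForm.truth]

lemma dia_assert (p : A) (φ : SForm A) (C : Context A) :
    Assert C (dia p φ) ↔ ∃ D : Context A, D.Nonempty ∧ D ⊆ C ∧ Assert D φ := by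
  constructor
  · rintro ⟨D, hD, hsub, hφ, _⟩
    exact ⟨D, hD, hsub, hφ⟩
  · rintro ⟨D, hD, hsub, hφ⟩
    exact ⟨D, hD, hsub, hφ, bot_deny p D⟩

lemma exists_sub (C : Context A) (P : World A → Prop) :
    (∃ D : Context A, D.Nonempty ∧ D ⊆ C ∧ ∀ w ∈ D, P w) ↔ ∃ w ∈ C, P w := by
  constructor
  · rintro ⟨D, ⟨w, hw⟩, hsub, h⟩
    exact ⟨w, hsub hw, h w hw⟩
  · rintro ⟨w, hw, h⟩
    exact ⟨{w}, ⟨w, rfl⟩, by simpa using hw, by simpa using h⟩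

mutual
lemma wneg_assert (p : A) (φ : SForm A) (C : Context A) (hC : C.Nonempty) :
    Assert C (wneg p φ) ↔ ¬ Assert C φ := by
  match φ with
  | .base α =>
      rw [wneg, dia_assert]
      show (∃ D : Context A, D.Nonempty ∧ D ⊆ C ∧ ∀ w ∈ D, α.truth w = false) ↔
        ¬ ∀ w ∈ C, α.truth w = true
      rw [exists_sub]
      push_neg
      simp
  | .ineg ψ =>
      rw [wneg]
      exact wnegNeg_assert p ψ C hC
  | .iimp ψ χ =>
      rw [wneg, dia_assert]
      constructor
      · rintro ⟨D, hD, hsub, hψ, hwχ⟩ h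
        exact (wneg_assert p χ D hD).1 hwχ (h D hD hsub hψ)
      · intro h
        simp only [Assert, SForm.sem] at h
        push_neg at h
        obtain ⟨D, hD, hsub, hψ, hχ⟩ := h
        exact ⟨D, hD, hsub, hψ, (wneg_assert p χ D hD).2 hχ⟩
  | .iconj ψ χ =>
      rw [wneg]
      show Assert C (wneg p ψ) ∨ Assert C (wneg p χ) ↔ ¬ (Assert C ψ ∧ Assert C χ)
      rw [wneg_assert p ψ C hC, wneg_assert p χ C hC]
      tauto
  | .idisj ψ χ =>
      rw [wneg]
      show Assert C (wneg p ψ) ∧ Assert C (wneg p χ) ↔ ¬ (Assert C ψ ∨ Assert C χ)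
      rw [wneg_assert p ψ C hC, wneg_assert p χ C hC]
      tauto

lemma wnegNeg_assert (p : A) (φ : SForm A) (C : Context A) (hC : C.Nonempty) :
    Assert C (wnegNeg p φ) ↔ ¬ Deny C φ := by
  match φ with
  | .base α =>
      rw [wnegNeg, dia_assert]
      show (∃ D : Context A, D.Nonempty ∧ D ⊆ C ∧ ∀ w ∈ D, α.truth w = true) ↔
        ¬ ∀ w ∈ C, α.truth w = false
      rw [exists_sub]
      push_neg
      simp
  | .ineg ψ =>
      rw [wnegNeg]
      exact wneg_assert p ψ C hC
  | .iimp ψ χ =>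
      rw [wnegNeg]
      show (∀ D : Context A, D.Nonempty → D ⊆ C → Assert D ψ → Assert D (wnegNeg p χ)) ↔
        ¬ ∃ D : Context A, D.Nonempty ∧ D ⊆ C ∧ Assert D ψ ∧ Deny D χ
      push_neg
      constructor
      · intro h D hD hsub hψ
        exact (wnegNeg_assert p χ D hD).1 (h D hD hsub hψ)
      · intro h D hD hsub hψ
        exact (wnegNeg_assert p χ D hD).2 (h D hD hsub hψ)
  | .iconj ψ χ =>
      rw [wnegNeg]
      show Assert C (wnegNeg p ψ) ∧ Assert C (wnegNeg p χ) ↔ ¬ (Deny C ψ ∨ Deny C χ)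
      rw [wnegNeg_assert p ψ C hC, wnegNeg_assert p χ C hC]
      tauto
  | .idisj ψ χ =>
      rw [wnegNeg]
      show Assert C (wnegNeg p ψ) ∨ Assert C (wnegNeg p χ) ↔ ¬ (Deny C ψ ∧ Deny C χ)
      rw [wnegNeg_assert p ψ C hC, wnegNeg_assert p χ C hC]
      tauto
end

theorem not_entails_iff_wneg_model (p : A) (Δ : Set (SForm A)) (φ : SForm A) :
    ¬ Entails Δ φ ↔
      ∃ C : Context A, C.Nonempty ∧ ∀ ψ ∈ insert (wneg p φ) Δ, Assert C ψ := by
  unfold Entails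
  push_neg
  constructor
  · rintro ⟨C, hC, hΔ, hφ⟩
    refine ⟨C, hC, ?_⟩
    intro ψ hψ
    rcases Set.mem_insert_iff.1 hψ with rfl | h
    · exact (wneg_assert p φ C hC).2 hφ
    · exact hΔ ψ h
  · rintro ⟨C, hC, h⟩
    exact ⟨C, hC, fun δ hδ => h δ (Set.mem_insert_of_mem _ hδ),
      (wneg_assert p φ C hC).1 (h _ (Set.mem_insert _ _))⟩

end LAD
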